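/- arXiv:0909.3755 — 2 statements merged into one kernel-verified Lean document; each statement's English description precedes it below -/
import Mathlib

section
/- Every non-symmetric amorphous association scheme is commutative: if A_0, A_1, …, A_d form an association scheme that is amorphous and non-symmetric, then A_i · A_j = A_j · A_i for all i, j. -/
open Matrix BigOperators

/-- An association scheme on `n` vertices, encoded as a family of `n × n`
real `0/1`-matrices indexed by `ι`: `e` is the index of the diagonal (identity)
relation and `σ` is the pairing sending each relation to its transpose.
All relations are nonempty, the identity relation is the identity matrix,
the relations partition `X × X` (the matrices sum to the all-ones matrix `J`),
the family is closed under transposition, and products of the matrices are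
nonnegative-integer linear combinations of the matrices. -/
def IsAssocScheme {ι : Type} [Fintype ι] (n : ℕ)
    (A : ι → Matrix (Fin n) (Fin n) ℝ) (e : ι) (σ : ι → ι) : Prop :=
  (∀ i, A i ≠ 0) ∧
  (∀ i x y, A i x y = 0 ∨ A i x y = 1) ∧
  A e = 1 ∧
  (∑ i, A i) = Matrix.of (fun _ _ => (1 : ℝ)) ∧
  (∀ i, (A i)ᵀ = A (σ i)) ∧
  (∀ i j, ∃ p : ι → ℕ, A i * A j = ∑ k, (p k : ℝ) • A k)

/-- `Λ` is a partition of the index set `ι`: its blocks are nonempty and every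
index lies in exactly one block. -/
def IsPartition {ι : Type} [Fintype ι] [DecidableEq ι]
    (Λ : Finset (Finset ι)) : Prop :=
  (∀ C ∈ Λ, C.Nonempty) ∧ ∀ i : ι, ∃! C, C ∈ Λ ∧ i ∈ C

/-- A partition `Λ` of the index set is admissible (for a scheme with diagonal
index `e` and transpose pairing `σ`) if `{e}` is a block of `Λ` and the image
of every block under the pairing `σ` is again a block. -/
def Admissible {ι : Type} [Fintype ι] [DecidableEq ι]
    (e : ι) (σ : ι → ι) (Λ : Finset (Finset ι)) : Prop :=
  ({e} : Finset ι) ∈ Λ ∧ ∀ C ∈ Λ, C.image σ ∈ Λ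

/-- The partition `Λ` gives rise to a fusion scheme: the block sums
`B_C = ∑_{i ∈ C} A_i`, indexed by the blocks of `Λ`, again form an
association scheme, with diagonal block `{e}`. -/
def GivesFusion {ι : Type} [Fintype ι] [DecidableEq ι] (n : ℕ)
    (A : ι → Matrix (Fin n) (Fin n) ℝ) (e : ι) (Λ : Finset (Finset ι)) : Prop :=
  ∃ (E : {C // C ∈ Λ}) (σ' : {C // C ∈ Λ} → {C // C ∈ Λ}),
    (E : Finset ι) = {e} ∧
    IsAssocScheme n (fun C : {C // C ∈ Λ} => ∑ i ∈ (C : Finset ι), A i) E σ'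

/-- The scheme is amorphous: every admissible partition of the index set gives
rise to a fusion scheme. -/
def Amorphous {ι : Type} [Fintype ι] [DecidableEq ι] (n : ℕ)
    (A : ι → Matrix (Fin n) (Fin n) ℝ) (e : ι) (σ : ι → ι) : Prop :=
  ∀ Λ : Finset (Finset ι), IsPartition Λ → Admissible e σ Λ → GivesFusion n A e Λ

/-! Take a set `S` of relations that contains the diagonal and is closed under transposition,
and fuse all relations outside `S` into one. By amorphy this is a fusion scheme, so for
`i, j ∈ S` the commutator `X = A_i A_j - A_j A_i` lies in its Bose–Mesner algebra. That algebra
is closed under transposition, so `X = 0` as soon as `tr (B X) = 0` for each of its basis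
matrices `B`: then `tr (Xᵀ X) = 0`. For `B = A_l`, `l ∈ S`, this holds when `A_l` commutes with
`A_i` or with `A_j`. The fused block is `J - ∑_{l ∈ S} A_l`, and `tr (J X) = 0` because every
`A_l` has constant row sums.

With `S = {0, a, a'}` this first shows that each `A_a` commutes with its transpose, and then,
with `S = {0, i, i', j, j'}`, that any two relations commute. -/

theorem Matrix.trace_mul_commutator_eq_zero_of_commute_left {m R : Type*} [Fintype m]
    [CommRing R] {L M N : Matrix m m R} (h : Commute L M) :
    trace (L * (M * N - N * M)) = 0 := by
  rw [mul_sub, trace_sub, trace_mul_cycle' L N M, ← mul_assoc M, ← h.eq, mul_assoc, sub_self]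

theorem Matrix.trace_mul_commutator_eq_zero_of_commute_right {m R : Type*} [Fintype m]
    [CommRing R] {L M N : Matrix m m R} (h : Commute L N) :
    trace (L * (M * N - N * M)) = 0 := by
  rw [mul_sub, trace_sub, trace_mul_cycle' L M N, ← mul_assoc N, ← h.eq, mul_assoc, sub_self]

section Partition

variable {ι : Type} [Fintype ι] [DecidableEq ι]

def partitionSingletonsCompl (S : Finset ι) : Finset (Finset ι) :=
  (insert (Finset.univ \ S) (S.image fun a => ({a} : Finset ι))).erase ∅

variable {S : Finset ι}

theorem singleton_mem_partitionSingletonsCompl {a : ι} (ha : a ∈ S) :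
    {a} ∈ partitionSingletonsCompl S :=
  Finset.mem_erase.2 ⟨Finset.singleton_ne_empty a,
    Finset.mem_insert_of_mem (Finset.mem_image_of_mem _ ha)⟩

theorem compl_mem_partitionSingletonsCompl {x : ι} (hx : x ∉ S) :
    Finset.univ \ S ∈ partitionSingletonsCompl S :=
  Finset.mem_erase.2 ⟨Finset.ne_empty_of_mem (Finset.mem_sdiff.2 ⟨Finset.mem_univ x, hx⟩),
    Finset.mem_insert_self _ _⟩

theorem eq_singleton_or_eq_compl_of_mem_partitionSingletonsCompl {C : Finset ι}
    (hC : C ∈ partitionSingletonsCompl S) : (∃ a ∈ S, C = {a}) ∨ C = Finset.univ \ S := by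
  rcases Finset.mem_insert.1 (Finset.mem_erase.1 hC).2 with h | h
  · exact Or.inr h
  · obtain ⟨a, ha, rfl⟩ := Finset.mem_image.1 h
    exact Or.inl ⟨a, ha, rfl⟩

theorem isPartition_partitionSingletonsCompl : IsPartition (partitionSingletonsCompl S) := by
  refine ⟨fun C hC => Finset.nonempty_iff_ne_empty.2 (Finset.mem_erase.1 hC).1, fun x => ?_⟩
  by_cases hx : x ∈ S
  · refine ⟨{x}, ⟨singleton_mem_partitionSingletonsCompl hx, Finset.mem_singleton_self x⟩, ?_⟩
    rintro C ⟨hC, hxC⟩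
    rcases eq_singleton_or_eq_compl_of_mem_partitionSingletonsCompl hC with ⟨a, -, rfl⟩ | rfl
    · rw [Finset.mem_singleton.1 hxC]
    · exact absurd hx (Finset.mem_sdiff.1 hxC).2
  · refine ⟨Finset.univ \ S, ⟨compl_mem_partitionSingletonsCompl hx, by simpa using hx⟩, ?_⟩
    rintro C ⟨hC, hxC⟩
    rcases eq_singleton_or_eq_compl_of_mem_partitionSingletonsCompl hC with ⟨a, ha, rfl⟩ | rfl
    · exact absurd (Finset.mem_singleton.1 hxC ▸ ha) hx
    · rfl

theorem admissible_partitionSingletonsCompl {e : ι} {σ : ι → ι} (hσ : Function.Involutive σ)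
    (he : e ∈ S) (hS : ∀ a ∈ S, σ a ∈ S) : Admissible e σ (partitionSingletonsCompl S) := by
  refine ⟨singleton_mem_partitionSingletonsCompl he, fun C hC => ?_⟩
  rcases eq_singleton_or_eq_compl_of_mem_partitionSingletonsCompl hC with ⟨a, ha, rfl⟩ | rfl
  · rw [Finset.image_singleton]
    exact singleton_mem_partitionSingletonsCompl (hS a ha)
  · have hσS : ∀ a, σ a ∈ S ↔ a ∈ S := fun a => ⟨fun h => hσ a ▸ hS _ h, hS a⟩
    have : (Finset.univ \ S).image σ = Finset.univ \ S := by
      ext x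
      simp only [Finset.mem_image, Finset.mem_sdiff, Finset.mem_univ, true_and]
      exact ⟨by rintro ⟨y, hy, rfl⟩; rwa [hσS], fun hx => ⟨σ x, by rwa [hσS], hσ x⟩⟩
    rwa [this]

end Partition

namespace IsAssocScheme

variable {ι : Type} [Fintype ι] {n : ℕ} {A : ι → Matrix (Fin n) (Fin n) ℝ} {e : ι}
  {σ : ι → ι}

local notation "J" => Matrix.of fun (_ _ : Fin n) => (1 : ℝ)

theorem ne_zero (hA : IsAssocScheme n A e σ) (i : ι) : A i ≠ 0 := hA.1 i

theorem apply_eq_zero_or_eq_one (hA : IsAssocScheme n A e σ) (i : ι) (x y : Fin n) :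
    A i x y = 0 ∨ A i x y = 1 :=
  hA.2.1 i x y

theorem diagRel_eq_one (hA : IsAssocScheme n A e σ) : A e = 1 := hA.2.2.1

theorem sum_eq_allOnes (hA : IsAssocScheme n A e σ) : ∑ i, A i = J := hA.2.2.2.1

theorem transpose_eq (hA : IsAssocScheme n A e σ) (i : ι) : (A i)ᵀ = A (σ i) := hA.2.2.2.2.1 i

theorem exists_mul_eq_sum (hA : IsAssocScheme n A e σ) (i j : ι) :
    ∃ p : ι → ℕ, A i * A j = ∑ k, (p k : ℝ) • A k :=
  hA.2.2.2.2.2 i j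

theorem sum_apply (hA : IsAssocScheme n A e σ) (x y : Fin n) : ∑ i, A i x y = 1 := by
  simpa [Matrix.sum_apply] using congrFun (congrFun hA.sum_eq_allOnes x) y

theorem apply_nonneg (hA : IsAssocScheme n A e σ) (i : ι) (x y : Fin n) : 0 ≤ A i x y := by
  rcases hA.apply_eq_zero_or_eq_one i x y with h | h <;> simp [h]

theorem apply_self_eq_zero (hA : IsAssocScheme n A e σ) {i : ι} (hi : i ≠ e) (x : Fin n) :
    A i x x = 0 := by
  classical
  have hsum := hA.sum_apply x x
  rw [← Finset.add_sum_erase _ _ (Finset.mem_univ e), hA.diagRel_eq_one, Matrix.one_apply_eq,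
    add_eq_left] at hsum
  exact (Finset.sum_eq_zero_iff_of_nonneg fun k _ => hA.apply_nonneg k x x).1 hsum i
    (Finset.mem_erase.2 ⟨hi, Finset.mem_univ i⟩)

theorem injective (hA : IsAssocScheme n A e σ) : Function.Injective A := by
  classical
  intro a b hab
  by_contra hne
  obtain ⟨x, y, hxy⟩ : ∃ x y, A a x y ≠ 0 := by
    by_contra! h
    exact hA.ne_zero a (Matrix.ext h)
  have hb : A b x y ≤ ∑ k ∈ Finset.univ.erase a, A k x y :=
    Finset.single_le_sum (fun k _ => hA.apply_nonneg k x y)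
      (Finset.mem_erase.2 ⟨Ne.symm hne, Finset.mem_univ b⟩)
  have hsum := hA.sum_apply x y
  rw [← Finset.add_sum_erase _ _ (Finset.mem_univ a)] at hsum
  rw [← hab] at hb
  linarith [(hA.apply_eq_zero_or_eq_one a x y).resolve_left hxy]

theorem involutive (hA : IsAssocScheme n A e σ) : Function.Involutive σ := fun i =>
  hA.injective (by rw [← hA.transpose_eq, ← hA.transpose_eq, transpose_transpose])

theorem pairing_diag (hA : IsAssocScheme n A e σ) : σ e = e :=
  hA.injective (by rw [← hA.transpose_eq, hA.diagRel_eq_one, transpose_one])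

theorem mul_allOnes (hA : IsAssocScheme n A e σ) (i : ι) : ∃ k : ℝ, A i * J = k • J := by
  classical
  obtain ⟨p, hp⟩ := hA.exists_mul_eq_sum i (σ i)
  refine ⟨p e, Matrix.ext fun x y => ?_⟩
  have hdiag := congrFun (congrFun hp x) x
  rw [Matrix.sum_apply, Finset.sum_eq_single e (fun k _ hk => by simp [hA.apply_self_eq_zero hk])
    (by simp), ← hA.transpose_eq, hA.diagRel_eq_one] at hdiag
  have hsq : ∀ z, A i x z * A i x z = A i x z := fun z => by
    rcases hA.apply_eq_zero_or_eq_one i x z with h | h <;> simp [h]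
  simpa [Matrix.mul_apply, hsq] using hdiag

theorem trace_allOnes_mul_commutator (hA : IsAssocScheme n A e σ) (i j : ι) :
    trace (J * (A i * A j - A j * A i)) = 0 := by
  have key : ∀ {a b : ι} {ka kb : ℝ}, A a * J = ka • J → A b * J = kb • J →
      trace (J * (A a * A b)) = ka * kb * trace J := by
    intro a b ka kb ha hb
    rw [trace_mul_comm, mul_assoc, hb, Matrix.mul_smul, trace_smul, ha, trace_smul, smul_eq_mul,
      smul_eq_mul, mul_assoc, mul_left_comm]
  obtain ⟨ki, hi⟩ := hA.mul_allOnes i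
  obtain ⟨kj, hj⟩ := hA.mul_allOnes j
  rw [mul_sub, trace_sub, key hi hj, key hj hi, mul_comm ki, sub_self]

theorem mul_mem_span (hA : IsAssocScheme n A e σ) (i j : ι) :
    A i * A j ∈ Submodule.span ℝ (Set.range A) := by
  obtain ⟨p, hp⟩ := hA.exists_mul_eq_sum i j
  rw [hp]
  exact Submodule.sum_mem _ fun k _ => Submodule.smul_mem _ _ (Submodule.subset_span ⟨k, rfl⟩)

theorem eq_zero_of_mem_span_of_trace_mul_eq_zero (hA : IsAssocScheme n A e σ)
    {X : Matrix (Fin n) (Fin n) ℝ} (hX : X ∈ Submodule.span ℝ (Set.range A))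
    (h : ∀ i, trace (A i * X) = 0) : X = 0 := by
  obtain ⟨c, rfl⟩ := (Submodule.mem_span_range_iff_exists_fun ℝ).1 hX
  rw [← trace_conjTranspose_mul_self_eq_zero_iff, conjTranspose_eq_transpose_of_trivial,
    transpose_sum, Finset.sum_mul, trace_sum]
  refine Finset.sum_eq_zero fun i _ => ?_
  rw [transpose_smul, smul_mul_assoc, trace_smul, hA.transpose_eq, h, smul_zero]

variable [DecidableEq ι]

theorem commute_of_amorphous_of_mem (hA : IsAssocScheme n A e σ) (ham : Amorphous n A e σ)
    {S : Finset ι} (he : e ∈ S) (hS : ∀ l ∈ S, σ l ∈ S) {i j : ι} (hi : i ∈ S) (hj : j ∈ S)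
    (hcomm : ∀ l ∈ S, Commute (A l) (A i) ∨ Commute (A l) (A j)) : Commute (A i) (A j) := by
  obtain ⟨E, σ', -, hB⟩ := ham _ isPartition_partitionSingletonsCompl
    (admissible_partitionSingletonsCompl hA.involutive he hS)
  set B : {C // C ∈ partitionSingletonsCompl S} → Matrix (Fin n) (Fin n) ℝ :=
    fun C => ∑ l ∈ (C : Finset ι), A l
  have hBA : ∀ {a} (ha : a ∈ S), A a = B ⟨{a}, singleton_mem_partitionSingletonsCompl ha⟩ :=
    fun _ => (Finset.sum_singleton _ _).symm
  have hX : A i * A j - A j * A i ∈ Submodule.span ℝ (Set.range B) := by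
    rw [hBA hi, hBA hj]
    exact sub_mem (hB.mul_mem_span _ _) (hB.mul_mem_span _ _)
  have htr : ∀ l ∈ S, trace (A l * (A i * A j - A j * A i)) = 0 := fun l hl =>
    (hcomm l hl).elim trace_mul_commutator_eq_zero_of_commute_left
      trace_mul_commutator_eq_zero_of_commute_right
  refine sub_eq_zero.1 (hB.eq_zero_of_mem_span_of_trace_mul_eq_zero hX fun C => ?_)
  rcases eq_singleton_or_eq_compl_of_mem_partitionSingletonsCompl C.2 with ⟨a, ha, hC⟩ | hC
  · simp only [B, hC, Finset.sum_singleton]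
    exact htr a ha
  · simp only [B, hC]
    rw [Finset.sum_sdiff_eq_sub (Finset.subset_univ S), hA.sum_eq_allOnes, sub_mul, trace_sub,
      Finset.sum_mul, trace_sum, Finset.sum_eq_zero htr, hA.trace_allOnes_mul_commutator,
      sub_zero]

theorem commute_transpose (hA : IsAssocScheme n A e σ) (ham : Amorphous n A e σ) (i : ι) :
    Commute (A i) (A i)ᵀ := by
  rw [hA.transpose_eq]
  refine hA.commute_of_amorphous_of_mem ham (S := {e, i, σ i}) (by simp) ?_ (by simp) (by simp) ?_
  · intro l hl
    simp only [Finset.mem_insert, Finset.mem_singleton] at hl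
    rcases hl with rfl | rfl | rfl <;> simp [hA.pairing_diag, hA.involutive _]
  · intro l hl
    simp only [Finset.mem_insert, Finset.mem_singleton] at hl
    rcases hl with rfl | rfl | rfl
    · exact Or.inl (hA.diagRel_eq_one ▸ Commute.one_left _)
    · exact Or.inl (Commute.refl _)
    · exact Or.inr (Commute.refl _)

theorem commute_of_amorphous (hA : IsAssocScheme n A e σ) (ham : Amorphous n A e σ) (i j : ι) :
    Commute (A i) (A j) := by
  have hpair : ∀ a, Commute (A (σ a)) (A a) := fun a => by
    simpa only [hA.transpose_eq] using (hA.commute_transpose ham a).symm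
  refine hA.commute_of_amorphous_of_mem ham (S := {e, i, σ i, j, σ j}) (by simp) ?_ (by simp)
    (by simp) ?_
  · intro l hl
    simp only [Finset.mem_insert, Finset.mem_singleton] at hl
    rcases hl with rfl | rfl | rfl | rfl | rfl <;> simp [hA.pairing_diag, hA.involutive _]
  · intro l hl
    simp only [Finset.mem_insert, Finset.mem_singleton] at hl
    rcases hl with rfl | rfl | rfl | rfl | rfl
    · exact Or.inl (hA.diagRel_eq_one ▸ Commute.one_left _)
    · exact Or.inl (Commute.refl _)
    · exact Or.inl (hpair i)
    · exact Or.inr (Commute.refl _)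
    · exact Or.inr (hpair j)

end IsAssocScheme

theorem nonSymmetric_amorphous_is_commutative_general
    (d : ℕ) (n : ℕ)
    (A : Fin (d + 1) → Matrix (Fin n) (Fin n) ℝ) (σ : Fin (d + 1) → Fin (d + 1))
    (hA : IsAssocScheme n A 0 σ)
    (ham : Amorphous n A 0 σ) :
    ∀ i j, A i * A j = A j * A i :=
  fun i j => (hA.commute_of_amorphous ham i j).eq

/-- Every non-symmetric amorphous association scheme is commutative. -/
theorem nonSymmetric_amorphous_is_commutative
    (d : ℕ) (n : ℕ)
    (A : Fin (d + 1) → Matrix (Fin n) (Fin n) ℝ) (σ : Fin (d + 1) → Fin (d + 1))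
    (hA : IsAssocScheme n A 0 σ)
    (hns : ∃ i, A i ≠ (A i)ᵀ)
    (ham : Amorphous n A 0 σ) :
    ∀ i j, A i * A j = A j * A i :=
  nonSymmetric_amorphous_is_commutative_general d n A σ hA ham
end

section
/- Let G be a connected, non-complete strongly regular graph with parameters (n, k, λ, μ) whose real adjacency matrix has exactly three distinct eigenvalues k, r, s with r ≥ 0 > s, the eigenspaces of r and s having dimensions m_1 and m_2 respectively. If k = m_1 then, setting v = r − s and g = −s, one has n = v², k = g(v − 1), λ = (g − 1)(g − 2) + v − 2, and μ = g(g − 1) (that is, G has the parameters of a Latin square type graph L_g(v)). -/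
/-!
The adjacency matrix satisfies `A² = k I + λ A + μ (J - I - A)`. An eigenvector for `ρ ≠ k` is
orthogonal to the all-ones vector, which gives `ρ² = k + λ ρ - μ (1 + ρ)` for `ρ = r, s`; the
all-ones vector itself gives `k (k - λ - 1) = (n - k - 1) μ`. As `A` is symmetric, `ℝⁿ` is the
direct sum of its eigenspaces, so `n = 1 + m₁ + m₂` and `0 = tr A = k + r m₁ + s m₂`. Once
`m₁ = k`, these relations factor as `k (1 + r) (μ - s (s + 1)) = 0`, so `μ = s² + s`, and the other
parameters follow from `r + s = λ - μ` and `r s = μ - k`.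
-/

open Matrix Module

namespace Module.End

variable {R M N : Type*} [CommRing R] [AddCommGroup M] [Module R M] [AddCommGroup N] [Module R N]

theorem eigenspace_conj (f : End R M) (e : M ≃ₗ[R] N) (μ : R) :
    eigenspace (e.conj f) μ = (eigenspace f μ).map (e : M →ₗ[R] N) := by
  ext y
  rw [Submodule.mem_map_equiv, mem_eigenspace_iff, mem_eigenspace_iff, LinearEquiv.conj_apply,
    LinearMap.comp_apply, LinearMap.comp_apply, ← e.symm.injective.eq_iff, LinearEquiv.coe_coe,
    LinearEquiv.symm_apply_apply, map_smul]
  rfl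

theorem hasEigenvalue_conj_iff (f : End R M) (e : M ≃ₗ[R] N) (μ : R) :
    (e.conj f).HasEigenvalue μ ↔ f.HasEigenvalue μ := by
  rw [hasEigenvalue_iff, hasEigenvalue_iff, eigenspace_conj, ne_eq, Submodule.map_eq_bot_iff]

end Module.End

namespace LinearMap.IsSymmetric

open Module.End

variable {𝕜 E : Type*} [RCLike 𝕜] [NormedAddCommGroup E] [InnerProductSpace 𝕜 E]
  [FiniteDimensional 𝕜 E] {T : End 𝕜 E}

theorem trace_eq_sum_of_eq_smul_on_eigenspace (hT : T.IsSymmetric) {S : Finset 𝕜}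
    (hS : ∀ μ, T.HasEigenvalue μ → μ ∈ S) (f : End 𝕜 E) (c : 𝕜 → 𝕜)
    (hf : ∀ μ, ∀ x ∈ eigenspace T μ, f x = c μ • x) :
    trace 𝕜 E f = ∑ μ ∈ S, c μ * finrank 𝕜 (eigenspace T μ) := by
  have hInt : DirectSum.IsInternal fun μ : 𝕜 => eigenspace T μ :=
    DirectSum.isInternal_submodule_of_iSupIndep_of_iSup_eq_top (T.independent_genEigenspace 1)
      (Submodule.orthogonal_eq_bot_iff.mp hT.orthogonalComplement_iSup_eigenspaces_eq_bot)
  have hmaps : ∀ μ, Set.MapsTo f (eigenspace T μ) (eigenspace T μ) := fun μ x hx => by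
    rw [SetLike.mem_coe, hf μ x hx]
    exact Submodule.smul_mem _ _ hx
  have hrestrict : ∀ μ, f.restrict (hmaps μ) = c μ • LinearMap.id := fun μ =>
    LinearMap.ext fun x => Subtype.ext (hf μ x x.2)
  have hfin : {μ | eigenspace T μ ≠ ⊥}.Finite := T.finite_hasEigenvalue
  simp only [trace_eq_sum_trace_restrict' hInt hfin hmaps, hrestrict, map_smul, trace_id,
    smul_eq_mul]
  refine Finset.sum_subset (fun μ hμ => hS μ (hfin.mem_toFinset.mp hμ)) fun μ _ hμ => ?_
  rw [show eigenspace T μ = ⊥ by simpa using hμ, finrank_bot, Nat.cast_zero, mul_zero]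

theorem finrank_eq_sum_finrank_eigenspace (hT : T.IsSymmetric) {S : Finset 𝕜}
    (hS : ∀ μ, T.HasEigenvalue μ → μ ∈ S) :
    finrank 𝕜 E = ∑ μ ∈ S, finrank 𝕜 (eigenspace T μ) := by
  have h := hT.trace_eq_sum_of_eq_smul_on_eigenspace hS LinearMap.id 1
    fun _ x _ => (one_smul 𝕜 x).symm
  simpa only [trace_id, Pi.one_apply, one_mul, ← Nat.cast_sum, Nat.cast_inj] using h

theorem trace_eq_sum_mul_finrank_eigenspace (hT : T.IsSymmetric) {S : Finset 𝕜}
    (hS : ∀ μ, T.HasEigenvalue μ → μ ∈ S) :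
    trace 𝕜 E T = ∑ μ ∈ S, μ * finrank 𝕜 (eigenspace T μ) :=
  hT.trace_eq_sum_of_eq_smul_on_eigenspace hS T (fun μ => μ)
    fun _ _ hx => mem_eigenspace_iff.mp hx

end LinearMap.IsSymmetric

namespace Matrix

open Module.End

variable {𝕜 ι : Type*} [RCLike 𝕜] [Fintype ι] [DecidableEq ι]

theorem finrank_eigenspace_toEuclideanLin (A : Matrix ι ι 𝕜) (μ : 𝕜) :
    finrank 𝕜 (eigenspace (toEuclideanLin A) μ) = finrank 𝕜 (eigenspace A.mulVecLin μ) := by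
  change finrank 𝕜 (eigenspace ((WithLp.linearEquiv 2 𝕜 (ι → 𝕜)).symm.conj A.mulVecLin) μ) = _
  rw [eigenspace_conj, LinearEquiv.finrank_map_eq]

theorem hasEigenvalue_toEuclideanLin_iff (A : Matrix ι ι 𝕜) (μ : 𝕜) :
    HasEigenvalue (toEuclideanLin A) μ ↔ HasEigenvalue A.mulVecLin μ :=
  hasEigenvalue_conj_iff _ (WithLp.linearEquiv 2 𝕜 (ι → 𝕜)).symm μ

namespace IsHermitian

theorem card_eq_sum_finrank_eigenspace {A : Matrix ι ι 𝕜} (hA : A.IsHermitian) {S : Finset 𝕜}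
    (hS : ∀ μ, HasEigenvalue A.mulVecLin μ → μ ∈ S) :
    Fintype.card ι = ∑ μ ∈ S, finrank 𝕜 (eigenspace A.mulVecLin μ) := by
  have hT := isSymmetric_toEuclideanLin_iff.mpr hA
  rw [← finrank_euclideanSpace (𝕜 := 𝕜), hT.finrank_eq_sum_finrank_eigenspace fun μ hμ =>
    hS μ ((hasEigenvalue_toEuclideanLin_iff A μ).mp hμ)]
  simp only [finrank_eigenspace_toEuclideanLin]

theorem trace_eq_sum_mul_finrank_eigenspace {A : Matrix ι ι 𝕜} (hA : A.IsHermitian) {S : Finset 𝕜}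
    (hS : ∀ μ, HasEigenvalue A.mulVecLin μ → μ ∈ S) :
    A.trace = ∑ μ ∈ S, μ * finrank 𝕜 (eigenspace A.mulVecLin μ) := by
  have hT := isSymmetric_toEuclideanLin_iff.mpr hA
  have htrace : LinearMap.trace 𝕜 _ (toEuclideanLin A) = A.trace := by
    change LinearMap.trace 𝕜 _ ((WithLp.linearEquiv 2 𝕜 (ι → 𝕜)).symm.conj A.mulVecLin) = _
    rw [LinearMap.trace_conj', ← toLin'_apply', trace_toLin'_eq]
  rw [← htrace, hT.trace_eq_sum_mul_finrank_eigenspace fun μ hμ =>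
    hS μ ((hasEigenvalue_toEuclideanLin_iff A μ).mp hμ)]
  simp only [finrank_eigenspace_toEuclideanLin]

end IsHermitian

end Matrix

namespace SimpleGraph

variable {V α : Type*} [Fintype V] [Field α] {G : SimpleGraph V} [DecidableRel G.Adj]

theorem IsRegularOfDegree.sum_eq_zero_of_adjMatrix_mulVec_eq_smul {d : ℕ}
    (hG : G.IsRegularOfDegree d) {x : V → α} {ρ : α} (hx : G.adjMatrix α *ᵥ x = ρ • x)
    (hρ : ρ ≠ d) : ∑ i, x i = 0 := by
  have hsum : ρ * ∑ i, x i = d * ∑ i, x i := by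
    calc ρ * ∑ i, x i = 1 ⬝ᵥ (G.adjMatrix α *ᵥ x) := by
          simp [hx, one_dotProduct, Finset.mul_sum]
      _ = (G.adjMatrix α *ᵥ 1) ⬝ᵥ x := by
          rw [dotProduct_mulVec, ← mulVec_transpose, transpose_adjMatrix]
      _ = d * ∑ i, x i := by
          simp [hG.degree_eq, dotProduct, Finset.mul_sum]
  exact (mul_eq_mul_right_iff.mp hsum).resolve_left hρ

variable [DecidableEq V] {n k ℓ μ : ℕ}

theorem compl_adjMatrix_mulVec_apply (x : V → α) (i : V) :
    (Gᶜ.adjMatrix α *ᵥ x) i = ∑ j, x j - x i - (G.adjMatrix α *ᵥ x) i := by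
  have hcompl : Gᶜ.adjMatrix α = of 1 - 1 - G.adjMatrix α := by
    rw [← adjMatrix_completeGraph_eq_of_one_sub_one,
      ← IsCompl.adjMatrix_add_adjMatrix_eq_adjMatrix_completeGraph α (isCompl_compl (x := G)),
      add_sub_cancel_left]
  rw [hcompl, sub_mulVec, sub_mulVec]
  simp [mulVec, dotProduct]

theorem IsSRGWith.sq_mul_apply_of_mulVec_eq_smul (h : G.IsSRGWith n k ℓ μ) {x : V → α} {ρ : α}
    (hx : G.adjMatrix α *ᵥ x = ρ • x) (i : V) :
    ρ ^ 2 * x i = k * x i + ℓ * (ρ * x i) + μ * (∑ j, x j - x i - ρ * x i) := by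
  have hsq : G.adjMatrix α ^ 2 *ᵥ x = ρ ^ 2 • x := by
    rw [sq, ← mulVec_mulVec, hx, mulVec_smul, hx, smul_smul, sq]
  rw [h.matrix_eq, add_mulVec, add_mulVec, smul_mulVec, smul_mulVec, smul_mulVec, one_mulVec,
    hx] at hsq
  have hsq_i := congrFun hsq i
  simp only [Pi.add_apply, Pi.smul_apply] at hsq_i
  simp only [nsmul_eq_mul, smul_eq_mul, compl_adjMatrix_mulVec_apply, hx, Pi.smul_apply] at hsq_i
  linear_combination -hsq_i

theorem IsSRGWith.sq_eq_of_hasEigenvalue (h : G.IsSRGWith n k ℓ μ) {ρ : α}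
    (hρ : Module.End.HasEigenvalue (G.adjMatrix α).mulVecLin ρ) (hρk : ρ ≠ k) :
    ρ ^ 2 = k + ℓ * ρ - μ * (1 + ρ) := by
  obtain ⟨x, hx, hx0⟩ := hρ.exists_hasEigenvector
  have hAx : G.adjMatrix α *ᵥ x = ρ • x := Module.End.mem_eigenspace_iff.mp hx
  obtain ⟨i, hi⟩ := Function.ne_iff.mp hx0
  have hrel := h.sq_mul_apply_of_mulVec_eq_smul hAx i
  rw [h.regular.sum_eq_zero_of_adjMatrix_mulVec_eq_smul hAx hρk] at hrel
  exact mul_right_cancel₀ hi (by linear_combination hrel)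

theorem IsSRGWith.param_eq_of_field [Nonempty V] (h : G.IsSRGWith n k ℓ μ) :
    (k : α) * (k - ℓ - 1) = (n - k - 1) * μ := by
  have hones : G.adjMatrix α *ᵥ (fun _ => 1) = (k : α) • fun _ => 1 := by
    ext i
    simp [h.regular.degree_eq]
  have hrel := h.sq_mul_apply_of_mulVec_eq_smul hones (Classical.arbitrary V)
  simp only [mul_one, Finset.sum_const, Finset.card_univ, h.card, nsmul_eq_mul] at hrel
  linear_combination hrel

end SimpleGraph

theorem latin_square_parameters {n k l μ r s m : ℝ} (hk : k ≠ 0) (hr : r ≠ -1) (hs : s ≠ 0)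
    (hrs : r ≠ s)
    (hr_eq : r ^ 2 = k + l * r - μ * (1 + r)) (hs_eq : s ^ 2 = k + l * s - μ * (1 + s))
    (hparam : k * (k - l - 1) = (n - k - 1) * μ) (hdim : n = 1 + k + m)
    (htrace : k + r * k + s * m = 0) :
    n = (r - s) ^ 2 ∧ k = -s * (r - s - 1) ∧ l = (-s - 1) * (-s - 2) + (r - s) - 2 ∧
      μ = -s * (-s - 1) := by
  have hsum : r + s = l - μ := by
    have h : (r - s) * (r + s - (l - μ)) = 0 := by linear_combination hr_eq - hs_eq
    linear_combination (mul_eq_zero.mp h).resolve_left (sub_ne_zero.mpr hrs)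
  have hprod : r * s = μ - k := by linear_combination r * hsum - hr_eq
  have hfactor : k * (1 + r) * (μ - s * (s + 1)) = 0 := by
    linear_combination s * hparam + μ * s * hdim + μ * htrace - k * s * hsum - s * k * hprod
  have hμ : μ = s * (s + 1) := by
    have hr1 : 1 + r ≠ 0 := by contrapose! hr; linarith
    linear_combination (mul_eq_zero.mp hfactor).resolve_left (mul_ne_zero hk hr1)
  have hk_eq : k = -s * (r - s - 1) := by linear_combination hprod + hμ
  have hn : s * n = s * (r - s) ^ 2 := by
    linear_combination s * hdim + htrace + (s - 1 - r) * hk_eq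
  exact ⟨mul_left_cancel₀ hs hn, hk_eq, by linear_combination hμ - hsum,
    by linear_combination hμ⟩

theorem srg_k_eq_m1_is_latin_square_type_general
    (n k l μ : ℕ) (G : SimpleGraph (Fin n)) [DecidableRel G.Adj]
    (hsrg : G.IsSRGWith n k l μ)
    (r s : ℝ) (m₁ m₂ : ℕ)
    (hr : 0 ≤ r) (hs : s < 0)
    (hspec : spectrum ℝ (G.adjMatrix ℝ) = {(k : ℝ), r, s})
    (hkr : (k : ℝ) ≠ r) (hks : (k : ℝ) ≠ s)
    (hdimk : Module.finrank ℝ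
      (Module.End.eigenspace (G.adjMatrix ℝ).mulVecLin (k : ℝ)) = 1)
    (hdimr : Module.finrank ℝ
      (Module.End.eigenspace (G.adjMatrix ℝ).mulVecLin r) = m₁)
    (hdims : Module.finrank ℝ
      (Module.End.eigenspace (G.adjMatrix ℝ).mulVecLin s) = m₂)
    (heq : k = m₁)
    (v g : ℝ) (hv : v = r - s) (hg : g = -s) :
    (n : ℝ) = v ^ 2 ∧ (k : ℝ) = g * (v - 1) ∧
      (l : ℝ) = (g - 1) * (g - 2) + v - 2 ∧ (μ : ℝ) = g * (g - 1) := by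
  have hev : ∀ ρ, Module.End.HasEigenvalue (G.adjMatrix ℝ).mulVecLin ρ ↔
      ρ ∈ ({(k : ℝ), r, s} : Finset ℝ) := fun ρ => by
    rw [Module.End.hasEigenvalue_iff_mem_spectrum, ← Matrix.toLin'_apply', spectrum_toLin', hspec]
    simp
  have hr_ev := (hev r).mpr (by simp)
  have hs_ev := (hev s).mpr (by simp)
  have hA := G.isHermitian_adjMatrix ℝ
  have hdim := hA.card_eq_sum_finrank_eigenspace fun ρ => (hev ρ).mp
  have htrace := hA.trace_eq_sum_mul_finrank_eigenspace fun ρ => (hev ρ).mp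
  have hrs : r ≠ s := by linarith
  rw [Finset.sum_insert (by simp [hkr, hks]), Finset.sum_insert (by simp [hrs]),
    Finset.sum_singleton, hdimk, hdimr, hdims] at hdim htrace
  rw [Fintype.card_fin] at hdim
  rw [G.trace_adjMatrix ℝ] at htrace
  have hk : (k : ℝ) ≠ 0 := by
    rw [heq, Nat.cast_ne_zero, ← hdimr]
    exact fun h => Module.End.hasEigenvalue_iff.mp hr_ev (Submodule.finrank_eq_zero.mp h)
  have : Nonempty (Fin n) := ⟨⟨0, by omega⟩⟩
  subst hv hg heq
  exact latin_square_parameters (m := m₂) hk (by linarith) hs.ne hrs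
    (hsrg.sq_eq_of_hasEigenvalue hr_ev hkr.symm) (hsrg.sq_eq_of_hasEigenvalue hs_ev hks.symm)
    hsrg.param_eq_of_field
    (by rw [hdim]; push_cast; ring) (by push_cast at htrace; linarith)

/-- A connected, non-complete strongly regular graph whose adjacency matrix has
exactly three distinct real eigenvalues `k, r, s` (`r ≥ 0 > s`) with eigenspace
dimensions `1, m₁, m₂`: if `k = m₁` then, with `v = r - s` and `g = -s`, the
graph has Latin square type parameters `L_g(v)`. -/
theorem srg_k_eq_m1_is_latin_square_type
    (n k l μ : ℕ) (G : SimpleGraph (Fin n)) [DecidableRel G.Adj]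
    (hsrg : G.IsSRGWith n k l μ) (hconn : G.Connected) (hnc : G ≠ ⊤)
    (r s : ℝ) (m₁ m₂ : ℕ)
    (hr : 0 ≤ r) (hs : s < 0)
    (hspec : spectrum ℝ (G.adjMatrix ℝ) = {(k : ℝ), r, s})
    (hkr : (k : ℝ) ≠ r) (hks : (k : ℝ) ≠ s)
    (hdimk : Module.finrank ℝ
      (Module.End.eigenspace (G.adjMatrix ℝ).mulVecLin (k : ℝ)) = 1)
    (hdimr : Module.finrank ℝ
      (Module.End.eigenspace (G.adjMatrix ℝ).mulVecLin r) = m₁)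
    (hdims : Module.finrank ℝ
      (Module.End.eigenspace (G.adjMatrix ℝ).mulVecLin s) = m₂)
    (heq : k = m₁)
    (v g : ℝ) (hv : v = r - s) (hg : g = -s) :
    (n : ℝ) = v ^ 2 ∧ (k : ℝ) = g * (v - 1) ∧
      (l : ℝ) = (g - 1) * (g - 2) + v - 2 ∧ (μ : ℝ) = g * (g - 1) :=
  srg_k_eq_m1_is_latin_square_type_general n k l μ G hsrg r s m₁ m₂ hr hs hspec hkr hks hdimk hdimr
    hdims heq v g hv hg
end
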